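/- arXiv:1505.07241 — 3 statements merged into one kernel-verified Lean document; each statement's English description precedes it below -/
import Mathlib

section
/- Let V_Ricc be the span of {1, x, x^2} in ℝ[x] with Lie bracket [f,g] = f·g' − g·f'. If f ∈ ℝ[x] satisfies [f, h] ∈ V_Ricc for all h ∈ V_Ricc, then f ∈ V_Ricc. In other words, the normalizer of V_Ricc in the Lie algebra of polynomial vector fields on ℝ equals V_Ricc itself. -/
open Polynomial

noncomputable def lb (f g : Polynomial ℝ) : Polynomial ℝ :=
  f * derivative g - g * derivative f

noncomputable def VRicc : Submodule ℝ (Polynomial ℝ) :=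
  Submodule.span ℝ ({1, X, X ^ 2} : Set (Polynomial ℝ))

lemma VRicc_eq : VRicc = Polynomial.degreeLE ℝ 2 := by
  rw [show (2:WithBot ℕ) = ((2:ℕ):WithBot ℕ) from rfl, Polynomial.degreeLE_eq_span_X_pow, VRicc]
  congr 1
  rw [show Finset.range 3 = {0, 1, 2} from rfl]
  ext p
  simp [Finset.mem_insert, or_comm, or_assoc, eq_comm]

theorem normalizer_of_VRicc (f : Polynomial ℝ)
    (h : ∀ g ∈ VRicc, lb f g ∈ VRicc) : f ∈ VRicc := by
  have hX : lb f X ∈ VRicc := by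
    apply h
    rw [VRicc_eq, Polynomial.mem_degreeLE]
    exact le_trans Polynomial.degree_X_le (by norm_num)
  rw [VRicc_eq, Polynomial.mem_degreeLE] at hX ⊢
  rw [Polynomial.degree_le_iff_coeff_zero] at hX ⊢
  intro m hm
  have hm' : 2 < m := by exact_mod_cast hm
  have h0 := hX m hm
  obtain ⟨k, rfl⟩ : ∃ k, m = k + 1 := ⟨m - 1, by omega⟩
  rw [lb, Polynomial.derivative_X, mul_one] at h0
  rw [Polynomial.coeff_sub, Polynomial.coeff_X_mul, Polynomial.coeff_derivative] at h0
  have : f.coeff (k + 1) * (1 - (k + 1 : ℝ)) = 0 := by ring_nf; ring_nf at h0; linarith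
  rcases mul_eq_zero.mp this with h1 | h1
  · exact h1
  · exfalso
    have : (k : ℝ) ≥ 2 := by exact_mod_cast (by omega : 2 ≤ k)
    linarith
end

section
/- Fix q ≥ 3 and let V_Abel = span{1, x, x^2, ..., x^q} ⊆ ℝ[x] with bracket [f,g] = f·g' − g·f'. If f ∈ ℝ[x] satisfies [f, x^k] ∈ V_Abel for all k = 0, 1, ..., q, then f ∈ span{1, x}. That is, the largest Lie algebra W of polynomial vector fields with [W, V_Abel] ⊆ V_Abel is W_Abel = span{1, x}. -/
open Polynomial

/-- The span of the monomials `1, x, …, x^q`. -/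
noncomputable def VAbel (q : ℕ) : Submodule ℝ (Polynomial ℝ) :=
  Submodule.span ℝ ((fun k => (X : Polynomial ℝ) ^ k) '' Set.Iic q)

lemma VAbel_eq (q : ℕ) : VAbel q = Polynomial.degreeLE ℝ q := by
  rw [Polynomial.degreeLE_eq_span_X_pow, VAbel]
  rw [Finset.coe_image, Finset.coe_range]
  congr 1
  ext n
  simp [Nat.lt_succ_iff]

lemma coeff_lb (f : Polynomial ℝ) (j m : ℕ) (hm : 1 ≤ m) :
    (lb f (X ^ (j+1))).coeff (m + j) = ((j:ℝ) + 1 - m) * f.coeff m := by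
  have h1 : (f * derivative (X ^ (j+1) : Polynomial ℝ)).coeff (m + j)
      = ((j:ℝ)+1) * f.coeff m := by
    rw [derivative_X_pow]
    simp only [Nat.add_sub_cancel, Nat.cast_add, Nat.cast_one]
    rw [mul_left_comm, coeff_C_mul, coeff_mul_X_pow]
  have h2 : ((X:Polynomial ℝ) ^ (j+1) * derivative f).coeff (m + j)
      = (m:ℝ) * f.coeff m := by
    have : m + j = (m - 1) + (j + 1) := by omega
    rw [this, coeff_X_pow_mul, coeff_derivative]
    have : m - 1 + 1 = m := by omega
    rw [this]
    rw [Nat.cast_sub hm, Nat.cast_one]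
    ring
  simp only [lb, coeff_sub, h1, h2]
  ring

theorem normalizer_of_VAbel (q : ℕ) (hq : 3 ≤ q) (f : Polynomial ℝ)
    (h : ∀ k ≤ q, lb f (X ^ k) ∈ VAbel q) :
    f ∈ Submodule.span ℝ ({1, X} : Set (Polynomial ℝ)) := by
  have key : ∀ m, 2 ≤ m → f.coeff m = 0 := by
    intro m hm
    by_cases hmq : m = q
    · have hmem := h (q-1) (by omega)
      rw [VAbel_eq, Polynomial.mem_degreeLE] at hmem
      have hz : (lb f (X ^ (q-1))).coeff (m + (q-2)) = 0 := by
        apply coeff_eq_zero_of_degree_lt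
        refine lt_of_le_of_lt hmem ?_
        exact_mod_cast (by omega : q < m + (q-2))
      rw [show q - 1 = (q-2)+1 by omega, coeff_lb f (q-2) m (by omega)] at hz
      refine (mul_eq_zero.mp hz).resolve_left ?_
      rw [Nat.cast_sub (by omega : 2 ≤ q)]
      subst hmq
      push_cast
      intro hc; linarith
    · have hmem := h q le_rfl
      rw [VAbel_eq, Polynomial.mem_degreeLE] at hmem
      have hz : (lb f (X ^ ((q-1)+1))).coeff (m + (q-1)) = 0 := by
        rw [show (q-1)+1 = q by omega]
        apply coeff_eq_zero_of_degree_lt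
        refine lt_of_le_of_lt hmem ?_
        exact_mod_cast (by omega : q < m + (q-1))
      rw [coeff_lb f (q-1) m (by omega)] at hz
      refine (mul_eq_zero.mp hz).resolve_left ?_
      rw [Nat.cast_sub (by omega : 1 ≤ q)]
      push_cast
      intro hc
      apply hmq
      have : (m:ℝ) = q := by linarith
      exact_mod_cast this
  have hf : f = C (f.coeff 0) + C (f.coeff 1) * X := by
    ext n
    match n with
    | 0 => simp
    | 1 => simp
    | (n+2) => simp [key (n+2) (by omega), coeff_C, coeff_X, Polynomial.coeff_C_mul]
  rw [hf]
  apply Submodule.add_mem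
  · rw [show (C (f.coeff 0) : Polynomial ℝ) = f.coeff 0 • 1 by rw [smul_eq_C_mul, mul_one]]
    exact Submodule.smul_mem _ _ (Submodule.subset_span (by simp))
  · rw [show (C (f.coeff 1) * X : Polynomial ℝ) = f.coeff 1 • X by rw [smul_eq_C_mul]]
    exact Submodule.smul_mem _ _ (Submodule.subset_span (by simp))
end

section
/- For a polynomial f ∈ ℝ[x] of degree p ≥ 2 and any natural number k with k ≠ p, the polynomial g_k(x) = k·x^{k−1}·f(x) − x^k·f'(x) has degree exactly p + k − 1; moreover for k = p, deg g_p < 2p − 1. Consequently, if g_k ∈ span{1, x, ..., x^q} for all k = 0,...,q with q ≥ 3, then deg f ≤ 1. -/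
open Polynomial

noncomputable def gk (f : Polynomial ℝ) (k : ℕ) : Polynomial ℝ :=
  (k : ℝ) • X ^ (k - 1) * f - X ^ k * derivative f

lemma gk_zero (f : Polynomial ℝ) : gk f 0 = -derivative f := by
  simp [gk]

lemma gk_deg_le (f : Polynomial ℝ) (p k : ℕ) (hdeg : f.natDegree = p) (hp : 1 ≤ p) :
    (gk f k).degree ≤ ((p + k - 1 : ℕ) : WithBot ℕ) := by
  have hf : f ≠ 0 := fun h => by simp [h] at hdeg; omega
  have hder : degree (derivative f) ≤ ((p-1:ℕ):WithBot ℕ) := by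
    refine degree_le_natDegree.trans ?_
    exact_mod_cast (natDegree_derivative_le f).trans (by omega : f.natDegree - 1 ≤ p - 1)
  rcases Nat.eq_zero_or_pos k with rfl | hk
  · rw [gk_zero, degree_neg]
    exact hder.trans (by exact_mod_cast (by omega : p - 1 ≤ p + 0 - 1))
  unfold gk
  refine le_trans (degree_sub_le _ _) (max_le ?_ ?_)
  · calc degree ((k:ℝ) • X ^ (k-1) * f)
        ≤ degree ((k:ℝ) • (X:Polynomial ℝ) ^ (k-1)) + degree f := degree_mul_le _ _
      _ ≤ degree ((X:Polynomial ℝ) ^ (k-1)) + degree f :=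
          add_le_add (degree_smul_le _ _) le_rfl
      _ = (((k-1) + p : ℕ) : WithBot ℕ) := by
          rw [degree_X_pow, degree_eq_natDegree hf, hdeg, Nat.cast_add]
      _ ≤ _ := by exact_mod_cast (by omega : (k-1) + p ≤ p + k - 1)
  · calc degree ((X:Polynomial ℝ)^k * derivative f)
        ≤ degree ((X:Polynomial ℝ)^k) + degree (derivative f) := degree_mul_le _ _
      _ ≤ ((k:ℕ):WithBot ℕ) + ((p-1:ℕ):WithBot ℕ) := by
          rw [degree_X_pow]; exact add_le_add_right hder _
      _ ≤ _ := by
          rw [← Nat.cast_add]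
          exact_mod_cast (by omega : k + (p-1) ≤ p + k - 1)

lemma gk_coeff (f : Polynomial ℝ) (p k : ℕ) (hdeg : f.natDegree = p) (hp : 1 ≤ p) :
    (gk f k).coeff (p + k - 1) = ((k:ℝ) - p) * f.leadingCoeff := by
  have hlc : f.coeff p = f.leadingCoeff := by rw [leadingCoeff, hdeg]
  rcases Nat.eq_zero_or_pos k with rfl | hk
  · rw [gk_zero, coeff_neg, coeff_derivative]
    have h1 : p + 0 - 1 + 1 = p := by omega
    rw [h1, hlc]
    push_cast
    have h2 : ((p + 0 - 1 : ℕ) : ℝ) = (p : ℝ) - 1 := by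
      have : ((p - 1 : ℕ) : ℝ) = (p:ℝ) - 1 := by
        have := Nat.cast_sub (by omega : 1 ≤ p) (R := ℝ)
        simpa using this
      simpa using this
    rw [h2]; ring
  · unfold gk
    rw [coeff_sub, smul_mul_assoc, coeff_smul]
    have e1 : p + k - 1 = p + (k - 1) := by omega
    have e2 : p + k - 1 = (p - 1) + k := by omega
    rw [e1, coeff_X_pow_mul, ← e1, e2, coeff_X_pow_mul, coeff_derivative]
    have h1 : p - 1 + 1 = p := by omega
    rw [h1, hlc]
    have h2 : ((p - 1 : ℕ) : ℝ) = (p : ℝ) - 1 := by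
      have := Nat.cast_sub (by omega : 1 ≤ p) (R := ℝ); simpa using this
    rw [h2]
    simp [smul_eq_mul]; ring

lemma gk_deg_eq (f : Polynomial ℝ) (p k : ℕ) (hdeg : f.natDegree = p) (hp : 2 ≤ p)
    (hk : k ≠ p) : (gk f k).degree = ((p + k - 1 : ℕ) : WithBot ℕ) := by
  have hf : f ≠ 0 := fun h => by simp [h] at hdeg; omega
  refine le_antisymm (gk_deg_le f p k hdeg (by omega)) ?_
  refine le_degree_of_ne_zero ?_
  rw [gk_coeff f p k hdeg (by omega)]
  have : ((k:ℝ) - p) ≠ 0 := by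
    intro h
    have : (k:ℝ) = p := by linarith
    exact hk (by exact_mod_cast this)
  exact mul_ne_zero this (leadingCoeff_ne_zero.mpr hf)

lemma vabel_deg {q : ℕ} {g : Polynomial ℝ} (hg : g ∈ VAbel q) :
    g.degree ≤ (q : WithBot ℕ) := by
  have : VAbel q ≤ Polynomial.degreeLE ℝ q := by
    rw [VAbel, Submodule.span_le]
    rintro _ ⟨k, hk, rfl⟩
    rw [SetLike.mem_coe, mem_degreeLE]
    exact (degree_X_pow k).le.trans (by exact_mod_cast hk)
  exact (mem_degreeLE).mp (this hg)

theorem gk_degree (f : Polynomial ℝ) (p : ℕ) (hdeg : f.natDegree = p) (hp : 2 ≤ p) :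
    (∀ k : ℕ, k ≠ p → (gk f k).degree = ((p + k - 1 : ℕ) : WithBot ℕ)) ∧
    (gk f p).degree < ((2 * p - 1 : ℕ) : WithBot ℕ) ∧
    (∀ (h : Polynomial ℝ) (q : ℕ), 3 ≤ q →
      (∀ k ≤ q, gk h k ∈ VAbel q) → h.natDegree ≤ 1) := by
  refine ⟨fun k hk => gk_deg_eq f p k hdeg hp hk, ?_, ?_⟩
  · have hle := gk_deg_le f p p hdeg (by omega)
    have hco := gk_coeff f p p hdeg (by omega)
    rw [sub_self, zero_mul] at hco
    rcases lt_or_eq_of_le hle with h | h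
    · exact h.trans_le (by exact_mod_cast (by omega : p + p - 1 ≤ 2*p - 1))
    · exfalso
      have := coeff_ne_zero_of_eq_degree h
      exact this hco
  · intro h q hq hmem
    by_contra hcon
    push_neg at hcon
    set p' := h.natDegree with hp'
    have hp2 : 2 ≤ p' := hcon
    by_cases hpq : p' = q
    · have hk : q - 1 ≠ p' := by omega
      have hd := gk_deg_eq h p' (q-1) rfl hp2 hk
      have hb := vabel_deg (hmem (q-1) (by omega))
      rw [hd] at hb
      have : p' + (q-1) - 1 ≤ q := by exact_mod_cast hb
      omega
    · have hd := gk_deg_eq h p' q rfl hp2 (fun hh => hpq hh.symm)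
      have hb := vabel_deg (hmem q le_rfl)
      rw [hd] at hb
      have : p' + q - 1 ≤ q := by exact_mod_cast hb
      omega
end
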